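/- arXiv:2304.08694 — 2 statements merged into one kernel-verified Lean document; each statement's English description precedes it below -/
import Mathlib

section
/- Let m ≥ 5, 2 ≤ ℓ ≤ m/2, 0 ≤ R ≤ (m−ℓ)/(ℓ−1), A := {0,1,m−ℓ+1,…,m}, t := C(ℓ+R,R), and g := (R+1)(m−ℓ+1)−1. Then ρ_A(g) = t exactly. -/
/-!
Write `a = m - ℓ`, so the large elements of `A` are `a + 1, …, a + ℓ` and `g = R(a+1) + a`.
A representation of `g` is determined by its coefficients `f` on the large elements, the
coefficient of `1` absorbing the rest, so `ρ_A(g)` counts the `f` whose weighted sum is at most `g`.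
Since every weight lies in `[a+1, a+ℓ]` and `R(a+ℓ) ≤ g < (R+1)(a+1)` (the first inequality is
`(ℓ-1)R ≤ a`), that condition is exactly `∑ f ≤ R`, and stars and bars gives `C(ℓ+R, R)`.
-/

/-- Total representation function of `A = {0, 1, m−ℓ+1, …, m}`: coefficients on the
nonzero elements `1, m−ℓ+1, …, m`. -/
noncomputable def rhoA (m ℓ n : ℕ) : ℕ :=
  Nat.card {k : Fin (ℓ + 1) → ℕ //
    k 0 * 1 + (∑ i : Fin ℓ, k i.succ * (m - ℓ + 1 + i.val)) = n}

open Finset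

theorem card_sum_le_eq_choose {ι : Type*} [Fintype ι] (R : ℕ) :
    Nat.card {f : ι → ℕ // ∑ i, f i ≤ R} = (Fintype.card ι + R).choose R := by
  classical
  have slack : {f : ι → ℕ // ∑ i, f i ≤ R} ≃ {f : Option ι → ℕ // ∑ i, f i = R} :=
    { toFun f := ⟨fun o => o.elim (R - ∑ i, f.1 i) f.1, by
        rw [Fintype.sum_option]; dsimp only [Option.elim]; have := f.2; omega⟩
      invFun f := ⟨fun i => f.1 (some i), by
        have := f.2; rw [Fintype.sum_option] at this; dsimp only; omega⟩
      left_inv _ := rfl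
      right_inv f := by
        have := f.2
        rw [Fintype.sum_option] at this
        ext (_ | i)
        · simp only [Option.elim]; omega
        · rfl }
  rw [Nat.card_congr (slack.trans (Sym.equivNatSumOfFintype _ R).symm),
    Sym.natCard_sym_eq_choose, Nat.card_eq_fintype_card, Fintype.card_option,
    add_right_comm, Nat.add_sub_cancel]

theorem card_unit_add_sum_mul_eq_card_sum_mul_le {ℓ : ℕ} (w : Fin ℓ → ℕ) (n : ℕ) :
    Nat.card {k : Fin (ℓ + 1) → ℕ // k 0 + ∑ i, k i.succ * w i = n} =
      Nat.card {f : Fin ℓ → ℕ // ∑ i, f i * w i ≤ n} :=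
  Nat.card_congr
    { toFun k := ⟨fun i => k.1 i.succ, by dsimp only; have := k.2; omega⟩
      invFun f := ⟨Fin.cons (n - ∑ i, f.1 i * w i) f.1, by
        simp only [Fin.cons_zero, Fin.cons_succ]; have := f.2; omega⟩
      left_inv k := by
        ext i
        refine Fin.cases ?_ (fun _ => rfl) i
        have := k.2
        simp only [Fin.cons_zero]
        omega
      right_inv _ := rfl }

theorem sum_mul_le_iff_sum_le {ι : Type*} [Fintype ι] {w : ι → ℕ} {lo hi R n : ℕ}
    (hlo : ∀ i, lo ≤ w i) (hhi : ∀ i, w i ≤ hi) (hn : R * hi ≤ n) (hn' : n < (R + 1) * lo)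
    (f : ι → ℕ) : ∑ i, f i * w i ≤ n ↔ ∑ i, f i ≤ R := by
  constructor
  · intro h
    by_contra! hR
    have : (R + 1) * lo ≤ ∑ i, f i * w i :=
      calc (R + 1) * lo ≤ (∑ i, f i) * lo := Nat.mul_le_mul_right _ hR
        _ = ∑ i, f i * lo := sum_mul ..
        _ ≤ ∑ i, f i * w i := sum_le_sum fun i _ => Nat.mul_le_mul_left _ (hlo i)
    omega
  · intro h
    calc ∑ i, f i * w i ≤ ∑ i, f i * hi := sum_le_sum fun i _ => Nat.mul_le_mul_left _ (hhi i)
      _ = (∑ i, f i) * hi := (sum_mul ..).symm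
      _ ≤ R * hi := Nat.mul_le_mul_right _ h
      _ ≤ n := hn

theorem stmt_12_general (m ℓ R : ℕ)
    (hR : (ℓ - 1) * R ≤ m - ℓ) (t : ℕ) (ht : t = (ℓ + R).choose R)
    (g : ℕ) (hg : g = (R + 1) * (m - ℓ + 1) - 1) :
    rhoA m ℓ g = t := by
  set a := m - ℓ
  have hg' : g = R * (a + 1) + a := by rw [hg, Nat.succ_mul]; omega
  have hhi : R * (a + ℓ) ≤ g :=
    calc R * (a + ℓ) ≤ R * (a + 1 + (ℓ - 1)) := Nat.mul_le_mul_left R (by omega)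
      _ = R * (a + 1) + (ℓ - 1) * R := by ring
      _ ≤ g := by omega
  have hlo : g < (R + 1) * (a + 1) := by rw [hg', Nat.succ_mul]; omega
  simp only [rhoA, mul_one]
  rw [card_unit_add_sum_mul_eq_card_sum_mul_le,
    Nat.card_congr (Equiv.subtypeEquivRight (sum_mul_le_iff_sum_le (lo := a + 1) (hi := a + ℓ)
      (fun i => by omega) (fun i => by omega) hhi hlo)),
    card_sum_le_eq_choose, Fintype.card_fin, ht]

/-- For `A = {0,1,m−ℓ+1,…,m}`, `t = C(ℓ+R,R)` and `g = (R+1)(m−ℓ+1)−1`, one has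
`ρ_A(g) = t` exactly. -/
theorem stmt_12 (m ℓ R : ℕ) (hm : 5 ≤ m) (hl : 2 ≤ ℓ) (hlm : 2 * ℓ ≤ m)
    (hR : (ℓ - 1) * R ≤ m - ℓ) (t : ℕ) (ht : t = (ℓ + R).choose R)
    (g : ℕ) (hg : g = (R + 1) * (m - ℓ + 1) - 1) :
    rhoA m ℓ g = t :=
  stmt_12_general m ℓ R hR t ht g hg
end

section
/- Let m ≥ 5, 2 ≤ ℓ ≤ m/2, 0 ≤ R ≤ (m−ℓ)/(ℓ−1), A := {0,1,m−ℓ+1,…,m}, t := C(ℓ+R,R), and g := (R+1)(m−ℓ+1)−1. Then g − m ≤ Fr_t(A) ≤ m·R − 1. -/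
/-!
Dropping the coefficient of the weight `1`, `rhoA m ℓ n` counts the lattice points `v ∈ ℕ^ℓ` with
`∑ vᵢ aᵢ ≤ n`, where the weights `aᵢ` lie in `[m − ℓ + 1, m]`. For `n ≥ mR` this set contains the
standard simplex `∑ vᵢ ≤ R`, which has `C(ℓ+R, R)` points; for `n < (m − ℓ + 1)R` it lies inside
`∑ vᵢ ≤ R − 1`, which has only `C(ℓ+R−1, R−1) < C(ℓ+R, R)` points. So every `n` with fewer than
`t` representations is below `mR`, and `(m − ℓ + 1)R − 1 ≥ g − m` is such an `n`.
-/

open Finset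

def simplexPoints {q : ℕ} (a : Fin q → ℕ) (n : ℕ) : Set (Fin q → ℕ) :=
  {v | ∑ i, v i * a i ≤ n}

section simplexPoints

variable {q : ℕ}

lemma finite_simplexPoints {a : Fin q → ℕ} (ha : ∀ i, 0 < a i) (n : ℕ) :
    (simplexPoints a n).Finite := by
  refine (Set.finite_Iic (fun _ => n)).subset fun v hv i => ?_
  calc v i ≤ v i * a i := Nat.le_mul_of_pos_right _ (ha i)
    _ ≤ ∑ j, v j * a j := single_le_sum (f := fun j => v j * a j) (fun _ _ => Nat.zero_le _)
        (mem_univ i)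
    _ ≤ n := hv

/-- The coefficient of the weight `1` is the slack of the inequality `∑ i, v i * a i ≤ n`. -/
lemma card_representations_eq (a : Fin q → ℕ) (n : ℕ) :
    Nat.card {k : Fin (q + 1) → ℕ // k 0 * 1 + ∑ i : Fin q, k i.succ * a i = n} =
      Nat.card (simplexPoints a n) :=
  Nat.card_congr
    { toFun := fun k => ⟨Fin.tail k.1, show ∑ i, k.1 i.succ * a i ≤ n by have := k.2; omega⟩
      invFun := fun v => ⟨Fin.cons (n - ∑ i, v.1 i * a i) v.1, by
        have : ∑ i, v.1 i * a i ≤ n := v.2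
        simp only [Fin.cons_zero, Fin.cons_succ]; omega⟩
      left_inv := fun k => by
        have := k.2
        ext i
        refine Fin.cases ?_ (fun _ => rfl) i
        simp only [Fin.cons_zero, Fin.tail]
        omega
      right_inv := fun v => rfl }

lemma card_simplexPoints_one (S : ℕ) :
    Nat.card (simplexPoints (1 : Fin q → ℕ) S) = (q + S).choose S := by
  have hsum (k : Fin (q + 1) → ℕ) :
      k 0 * 1 + ∑ i : Fin q, k i.succ * (1 : Fin q → ℕ) i = ∑ i, k i := by
    simp only [Pi.one_apply, mul_one, Fin.sum_univ_succ]
  rw [← card_representations_eq, Nat.card_congr (Equiv.subtypeEquivRight fun k => by rw [hsum k]),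
    ← Nat.card_congr (Sym.equivNatSumOfFintype (Fin (q + 1)) S), Nat.card_eq_fintype_card,
    Sym.card_sym_eq_choose, Fintype.card_fin, Nat.add_right_comm, Nat.add_sub_cancel]

lemma simplexPoints_one_subset {a : Fin q → ℕ} {M R n : ℕ} (haM : ∀ i, a i ≤ M)
    (hn : M * R ≤ n) : simplexPoints 1 R ⊆ simplexPoints a n := fun v hv =>
  calc ∑ i, v i * a i ≤ ∑ i, v i * M := sum_le_sum fun i _ => Nat.mul_le_mul_left _ (haM i)
    _ = (∑ i, v i * 1) * M := by simp [sum_mul]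
    _ ≤ R * M := Nat.mul_le_mul_right _ hv
    _ ≤ n := by rwa [mul_comm]

lemma simplexPoints_subset_one {a : Fin q → ℕ} {w R n : ℕ} (hwa : ∀ i, w ≤ a i)
    (hn : n < w * R) : simplexPoints a n ⊆ simplexPoints 1 (R - 1) := by
  intro v hv
  have hsum : w * ∑ i, v i ≤ ∑ i, v i * a i := by
    rw [mul_sum]
    exact sum_le_sum fun i _ => by rw [mul_comm]; exact Nat.mul_le_mul_left _ (hwa i)
  have : ∑ i, v i < R := lt_of_not_ge fun h =>
    absurd (hv.trans' (hsum.trans' (Nat.mul_le_mul_left w h))) (not_le.2 hn)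
  show ∑ i, v i * 1 ≤ R - 1
  simp only [mul_one]
  omega

end simplexPoints

lemma choose_pred_lt_choose {ℓ R : ℕ} (hℓ : 0 < ℓ) (hR : 0 < R) :
    (ℓ + (R - 1)).choose (R - 1) < (ℓ + R).choose R := by
  obtain ⟨r, rfl⟩ : ∃ r, R = r + 1 := ⟨R - 1, by omega⟩
  rw [Nat.add_sub_cancel, ← add_assoc, Nat.choose_succ_succ' (ℓ + r) r]
  have := Nat.choose_pos (show r + 1 ≤ ℓ + r by omega)
  omega

lemma rhoA_eq_card_simplexPoints (m ℓ n : ℕ) :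
    rhoA m ℓ n = Nat.card (simplexPoints (fun i : Fin ℓ => m - ℓ + 1 + i) n) :=
  card_representations_eq _ n

lemma choose_le_rhoA {m ℓ R n : ℕ} (hℓm : ℓ ≤ m) (hn : m * R ≤ n) :
    (ℓ + R).choose R ≤ rhoA m ℓ n := by
  rw [rhoA_eq_card_simplexPoints, ← card_simplexPoints_one]
  exact Nat.card_mono (finite_simplexPoints (fun _ => by omega) n)
    (simplexPoints_one_subset (fun i => by have := i.isLt; omega) hn)

lemma rhoA_lt_choose {m ℓ R n : ℕ} (hℓ : 0 < ℓ) (hn : n < (m - ℓ + 1) * R) :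
    rhoA m ℓ n < (ℓ + R).choose R := by
  have hR : 0 < R := Nat.pos_of_ne_zero fun h => by simp [h] at hn
  calc rhoA m ℓ n ≤ Nat.card (simplexPoints (1 : Fin ℓ → ℕ) (R - 1)) := by
        rw [rhoA_eq_card_simplexPoints]
        exact Nat.card_mono (finite_simplexPoints (fun _ => Nat.one_pos) _)
          (simplexPoints_subset_one (fun _ => by omega) hn)
    _ = (ℓ + (R - 1)).choose (R - 1) := card_simplexPoints_one _
    _ < (ℓ + R).choose R := choose_pred_lt_choose hℓ hR

theorem stmt_13_general (m ℓ R : ℕ) (hl : 2 ≤ ℓ) (hlm : 2 * ℓ ≤ m)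
    (t : ℕ) (ht : t = (ℓ + R).choose R)
    (g : ℕ) (hg : g = (R + 1) * (m - ℓ + 1) - 1)
    (Frt : ℕ) (hFrt : Frt = sSup {n : ℕ | rhoA m ℓ n < t}) :
    g - m ≤ Frt ∧ Frt ≤ m * R - 1 := by
  subst ht hFrt
  have hbound : ∀ n ∈ {n : ℕ | rhoA m ℓ n < (ℓ + R).choose R}, n ≤ m * R - 1 := fun n hn => by
    have : n < m * R := lt_of_not_ge fun h => (choose_le_rhoA (by omega) h).not_gt hn
    omega
  -- for `R = 0` the set is empty and its `sSup` is the junk value `0`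
  refine ⟨?_, csSup_le' hbound⟩
  rcases Nat.eq_zero_or_pos R with rfl | hR
  · omega
  have hmem : (m - ℓ + 1) * R - 1 ∈ {n : ℕ | rhoA m ℓ n < (ℓ + R).choose R} :=
    rhoA_lt_choose (by omega) (by have : 0 < (m - ℓ + 1) * R := Nat.mul_pos (by omega) hR; omega)
  refine le_trans ?_ (le_csSup ⟨_, hbound⟩ hmem)
  rw [hg, add_one_mul, mul_comm]
  omega

/-- For `A = {0,1,m−ℓ+1,…,m}`, `t = C(ℓ+R,R)`, `g = (R+1)(m−ℓ+1)−1`, one has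
`g − m ≤ Fr_t(A) ≤ mR − 1`. -/
theorem stmt_13 (m ℓ R : ℕ) (hm : 5 ≤ m) (hl : 2 ≤ ℓ) (hlm : 2 * ℓ ≤ m)
    (hR : (ℓ - 1) * R ≤ m - ℓ) (t : ℕ) (ht : t = (ℓ + R).choose R)
    (g : ℕ) (hg : g = (R + 1) * (m - ℓ + 1) - 1)
    (Frt : ℕ) (hFrt : Frt = sSup {n : ℕ | rhoA m ℓ n < t}) :
    g - m ≤ Frt ∧ Frt ≤ m * R - 1 :=
  stmt_13_general m ℓ R hl hlm t ht g hg Frt hFrt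
end
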